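/- Let m be a positive integer, τ ∈ ℍ, and z ∈ ℂ with −Im τ < Im z < 0; set y := e^{2πiz}. Then Σ_{k∈ℤ} y^{2km} q^{mk²} / (1 − y q^k) = Σ_{k>0, l≥0} y^{2km+l} q^{mk² + kl} − Σ_{k≤0, l<0} y^{2km+l} q^{mk² + kl}, where all three series converge absolutely (k, l range over ℤ subject to the stated inequalities). -/

import Mathlib

open Complex Real

/-!
Write `a k = y^(2km) q^(mk²)` and `r k = y q^k`, so that the `(k, l)` term of both cone series is
`a k * r k ^ l`. The condition `-Im τ < Im z < 0` gives some `θ < 1` with `‖r k‖ ≤ θ` for `k > 0`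
and `‖r k‖ ≥ θ⁻¹` for `k ≤ 0`; hence `a k / (1 - r k)` is `∑_{l ≥ 0} a k r k ^ l` in the first case
and `-∑_{l < 0} a k r k ^ l` in the second. Since `a k` is a Jacobi theta term (Gaussian decay in
`k`) and the cone terms are bounded by `‖a k‖ θ^|l|`, the double series converge absolutely and
may be summed over `l` first.
-/

/-- `qp τ c` is `q^c = e^{2πicτ}`. -/
noncomputable def qp (τ : ℂ) (c : ℝ) : ℂ := Complex.exp (2 * Real.pi * Complex.I * c * τ)

section Geometric

variable {𝕜 : Type*} [NormedField 𝕜]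

theorem hasSum_ite_nonneg_zpow {r : 𝕜} (h : ‖r‖ < 1) :
    HasSum (fun l : ℤ => if 0 ≤ l then r ^ l else 0) (1 - r)⁻¹ := by
  rw [← add_zero (1 - r)⁻¹]
  refine HasSum.of_nat_of_neg_add_one ?_ ?_
  · simpa using hasSum_geometric_of_norm_lt_one h
  · convert (hasSum_zero : HasSum (fun _ : ℕ => (0 : 𝕜)) 0) using 1
    exact funext fun n => if_neg (by omega)

theorem hasSum_ite_neg_zpow {r : 𝕜} (h : 1 < ‖r‖) :
    HasSum (fun l : ℤ => if l < 0 then r ^ l else 0) (-(1 - r)⁻¹) := by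
  have hr : r ≠ 0 := norm_pos_iff.mp (one_pos.trans h)
  have hinv : ‖r⁻¹‖ < 1 := by rw [norm_inv]; exact inv_lt_one_of_one_lt₀ h
  have hsum : -(1 - r)⁻¹ = 0 + r⁻¹ * (1 - r⁻¹)⁻¹ := by
    rw [zero_add, ← mul_inv, mul_sub, mul_one, mul_inv_cancel₀ hr, ← inv_neg, neg_sub]
  rw [hsum]
  refine HasSum.of_nat_of_neg_add_one ?_ ?_
  · convert (hasSum_zero : HasSum (fun _ : ℕ => (0 : 𝕜)) 0) using 1
    exact funext fun n => if_neg (by omega)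
  · refine ((hasSum_geometric_of_norm_lt_one hinv).mul_left r⁻¹).congr_fun fun n => ?_
    rw [if_pos (by omega), zpow_neg, ← inv_zpow, ← pow_succ']
    norm_cast

theorem summable_pow_natAbs {θ : ℝ} (h0 : 0 ≤ θ) (h1 : θ < 1) :
    Summable fun l : ℤ => θ ^ l.natAbs :=
  .of_nat_of_neg (by simpa using summable_geometric_of_lt_one h0 h1)
    (by simpa using summable_geometric_of_lt_one h0 h1)

theorem norm_zpow_le_pow_natAbs_of_nonneg {r : 𝕜} {θ : ℝ} {l : ℤ} (hl : 0 ≤ l) (hr : ‖r‖ ≤ θ) :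
    ‖r ^ l‖ ≤ θ ^ l.natAbs := by
  lift l to ℕ using hl
  simpa using pow_le_pow_left₀ (norm_nonneg r) hr l

theorem norm_zpow_le_pow_natAbs_of_neg {r : 𝕜} {θ : ℝ} {l : ℤ} (hθ : 0 < θ) (hl : l < 0)
    (hr : θ⁻¹ ≤ ‖r‖) : ‖r ^ l‖ ≤ θ ^ l.natAbs := by
  obtain ⟨n, rfl⟩ : ∃ n : ℕ, l = -n := ⟨l.natAbs, by omega⟩
  have : ‖r‖⁻¹ ≤ θ := inv_le_of_inv_le₀ hθ hr
  simpa using pow_le_pow_left₀ (by positivity) this n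

theorem one_sub_le_norm_one_sub {r : 𝕜} {θ : ℝ} (hθ0 : 0 < θ) (hθ1 : θ ≤ 1)
    (hr : ‖r‖ ≤ θ ∨ θ⁻¹ ≤ ‖r‖) : 1 - θ ≤ ‖1 - r‖ := by
  rcases hr with hr | hr
  · calc 1 - θ ≤ ‖(1 : 𝕜)‖ - ‖r‖ := by rw [norm_one]; linarith
      _ ≤ ‖1 - r‖ := norm_sub_norm_le _ _
  · have hθinv : θ * θ⁻¹ = 1 := mul_inv_cancel₀ hθ0.ne'
    calc 1 - θ ≤ θ⁻¹ - 1 := by nlinarith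
      _ ≤ ‖r‖ - ‖(1 : 𝕜)‖ := by rw [norm_one]; linarith
      _ ≤ ‖1 - r‖ := norm_sub_rev r 1 ▸ norm_sub_norm_le _ _

end Geometric

section Cone

variable {𝕜 ι : Type*} [NormedField 𝕜] {p : ι → Prop} [DecidablePred p] {a r : ι → 𝕜} {θ : ℝ}

theorem summable_norm_ite_mul_zpow (ha : Summable fun k => ‖a k‖) (hθ0 : 0 ≤ θ) (hθ1 : θ < 1)
    (P : ι × ℤ → Prop) [DecidablePred P] (hP : ∀ n, P n → ‖r n.1 ^ n.2‖ ≤ θ ^ n.2.natAbs) :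
    Summable fun n : ι × ℤ => if P n then ‖a n.1 * r n.1 ^ n.2‖ else 0 := by
  refine .of_nonneg_of_le (fun n => by split_ifs <;> positivity) (fun n => ?_)
    (ha.mul_of_nonneg (summable_pow_natAbs hθ0 hθ1) (fun _ => norm_nonneg _)
      (fun _ => by positivity))
  split_ifs with hn
  · rw [norm_mul]
    exact mul_le_mul_of_nonneg_left (hP n hn) (norm_nonneg _)
  · positivity

theorem summable_norm_div_one_sub (hθ0 : 0 < θ) (hθ1 : θ < 1)
    (hr : ∀ k, ‖r k‖ ≤ θ ∨ θ⁻¹ ≤ ‖r k‖) (ha : Summable fun k => ‖a k‖) :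
    Summable fun k => ‖a k / (1 - r k)‖ := by
  refine .of_nonneg_of_le (fun _ => norm_nonneg _) (fun k => ?_) (ha.mul_right (1 - θ)⁻¹)
  have hk : 1 - θ ≤ ‖1 - r k‖ := one_sub_le_norm_one_sub hθ0 hθ1.le (hr k)
  rw [norm_div, div_eq_mul_inv]
  gcongr

theorem summable_norm_ite_nonneg (hθ0 : 0 ≤ θ) (hθ1 : θ < 1) (hin : ∀ k, p k → ‖r k‖ ≤ θ)
    (ha : Summable fun k => ‖a k‖) :
    Summable fun n : ι × ℤ => if p n.1 ∧ 0 ≤ n.2 then ‖a n.1 * r n.1 ^ n.2‖ else 0 :=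
  summable_norm_ite_mul_zpow ha hθ0 hθ1 _
    fun _ hn => norm_zpow_le_pow_natAbs_of_nonneg hn.2 (hin _ hn.1)

theorem summable_norm_ite_neg (hθ0 : 0 < θ) (hθ1 : θ < 1) (hout : ∀ k, ¬p k → θ⁻¹ ≤ ‖r k‖)
    (ha : Summable fun k => ‖a k‖) :
    Summable fun n : ι × ℤ => if ¬p n.1 ∧ n.2 < 0 then ‖a n.1 * r n.1 ^ n.2‖ else 0 :=
  summable_norm_ite_mul_zpow ha hθ0.le hθ1 _
    fun _ hn => norm_zpow_le_pow_natAbs_of_neg hθ0 hn.2 (hout _ hn.1)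

theorem hasSum_ite_sub_ite {k : ι} (hin : p k → ‖r k‖ < 1) (hout : ¬p k → 1 < ‖r k‖) :
    HasSum (fun l : ℤ => (if p k ∧ 0 ≤ l then a k * r k ^ l else 0) -
      (if ¬p k ∧ l < 0 then a k * r k ^ l else 0)) (a k / (1 - r k)) := by
  by_cases hk : p k
  · simpa [hk, mul_ite, div_eq_mul_inv] using
      (hasSum_ite_nonneg_zpow (hin hk)).mul_left (a k)
  · simpa [hk, mul_ite, div_eq_mul_inv] using
      ((hasSum_ite_neg_zpow (hout hk)).mul_left (a k)).neg

theorem tsum_div_one_sub_eq_sub [CompleteSpace 𝕜] (hθ0 : 0 < θ) (hθ1 : θ < 1)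
    (hin : ∀ k, p k → ‖r k‖ ≤ θ) (hout : ∀ k, ¬p k → θ⁻¹ ≤ ‖r k‖)
    (ha : Summable fun k => ‖a k‖) :
    ∑' k, a k / (1 - r k) =
      (∑' n : ι × ℤ, if p n.1 ∧ 0 ≤ n.2 then a n.1 * r n.1 ^ n.2 else 0) -
      ∑' n : ι × ℤ, if ¬p n.1 ∧ n.2 < 0 then a n.1 * r n.1 ^ n.2 else 0 := by
  have hpos : Summable fun n : ι × ℤ => if p n.1 ∧ 0 ≤ n.2 then a n.1 * r n.1 ^ n.2 else 0 :=
    .of_norm <| (summable_norm_ite_nonneg hθ0.le hθ1 hin ha).congr fun n => by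
      split_ifs <;> simp
  have hneg : Summable fun n : ι × ℤ => if ¬p n.1 ∧ n.2 < 0 then a n.1 * r n.1 ^ n.2 else 0 :=
    .of_norm <| (summable_norm_ite_neg hθ0 hθ1 hout ha).congr fun n => by
      split_ifs <;> simp
  have hθinv : 1 < θ⁻¹ := one_lt_inv_iff₀.mpr ⟨hθ0, hθ1⟩
  rw [← hpos.tsum_sub hneg]
  exact ((hpos.sub hneg).hasSum.prod_fiberwise fun k => hasSum_ite_sub_ite
    (fun hk => (hin k hk).trans_lt hθ1) (fun hk => hθinv.trans_le (hout k hk))).tsum_eq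

end Cone

theorem qp_add (τ : ℂ) (b c : ℝ) : qp τ (b + c) = qp τ b * qp τ c := by
  rw [qp, qp, qp, ← Complex.exp_add]
  push_cast
  ring_nf

theorem qp_mul_intCast (τ : ℂ) (c : ℝ) (l : ℤ) : qp τ (c * l) = qp τ c ^ l := by
  rw [qp, qp, ← Complex.exp_int_mul]
  push_cast
  ring_nf

theorem norm_cexp_two_pi_I_mul (z : ℂ) : ‖cexp (2 * π * I * z)‖ = rexp (-(2 * π * z.im)) := by
  simp [Complex.norm_exp, Complex.mul_re]

theorem norm_qp (τ : ℂ) (c : ℝ) : ‖qp τ c‖ = rexp (-(2 * π * c * τ.im)) := by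
  simp [qp, Complex.norm_exp, Complex.mul_re]

theorem zpow_mul_qp_add_mul {y : ℂ} (hy : y ≠ 0) (τ : ℂ) (m : ℕ) (k l : ℤ) :
    y ^ (2 * k * (m : ℤ) + l) * qp τ ((m : ℝ) * (k : ℝ) ^ 2 + (k : ℝ) * (l : ℝ)) =
      y ^ (2 * k * (m : ℤ)) * qp τ ((m : ℝ) * (k : ℝ) ^ 2) * (y * qp τ k) ^ l := by
  rw [zpow_add₀ hy, qp_add, qp_mul_intCast, mul_zpow]
  ring

theorem cexp_zpow_mul_qp_eq_jacobiTheta₂_term (m : ℕ) (τ z : ℂ) (k : ℤ) :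
    cexp (2 * π * I * z) ^ (2 * k * (m : ℤ)) * qp τ ((m : ℝ) * (k : ℝ) ^ 2) =
      jacobiTheta₂_term k (2 * m * z) (2 * m * τ) := by
  rw [qp, ← Complex.exp_int_mul, ← Complex.exp_add, jacobiTheta₂_term]
  push_cast
  ring_nf

theorem summable_norm_cexp_zpow_mul_qp {m : ℕ} (hm : 0 < m) {τ : ℂ} (hτ : 0 < τ.im) (z : ℂ) :
    Summable fun k : ℤ =>
      ‖cexp (2 * π * I * z) ^ (2 * k * (m : ℤ)) * qp τ ((m : ℝ) * (k : ℝ) ^ 2)‖ := by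
  simp_rw [cexp_zpow_mul_qp_eq_jacobiTheta₂_term]
  refine summable_norm_iff.mpr ((summable_jacobiTheta₂_term_iff _ _).mpr ?_)
  simpa using mul_pos (mul_pos two_pos (Nat.cast_pos.mpr hm)) hτ

theorem norm_cexp_mul_qp (τ z : ℂ) (k : ℤ) :
    ‖cexp (2 * π * I * z) * qp τ k‖ = rexp (-(2 * π * (z.im + k * τ.im))) := by
  rw [norm_mul, norm_cexp_two_pi_I_mul, norm_qp, ← Real.exp_add]
  ring_nf

theorem exists_norm_cexp_mul_qp_le_or_inv_le {τ z : ℂ} (hz0 : -τ.im < z.im) (hz1 : z.im < 0) :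
    ∃ θ : ℝ, 0 < θ ∧ θ < 1 ∧
      (∀ k : ℤ, 0 < k → ‖cexp (2 * π * I * z) * qp τ k‖ ≤ θ) ∧
      (∀ k : ℤ, ¬0 < k → θ⁻¹ ≤ ‖cexp (2 * π * I * z) * qp τ k‖) := by
  -- `c` is the distance from `0` to the increasing sequence `z.im + k * τ.im`, attained at
  -- `k = 1` or `k = 0`.
  set c := min (z.im + τ.im) (-z.im)
  have hc : 0 < c := lt_min (by linarith) (by linarith)
  have hτ : 0 < τ.im := by linarith
  refine ⟨rexp (-(2 * π * c)), Real.exp_pos _, Real.exp_lt_one_iff.mpr (by nlinarith [pi_pos]),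
    fun k hk => ?_, fun k hk => ?_⟩
  · have : c ≤ z.im + k * τ.im := by
      have : (1 : ℝ) ≤ k := by exact_mod_cast hk
      nlinarith [min_le_left (z.im + τ.im) (-z.im)]
    rw [norm_cexp_mul_qp, Real.exp_le_exp]
    nlinarith [pi_pos]
  · have : c ≤ -(z.im + k * τ.im) := by
      have : (k : ℝ) ≤ 0 := by exact_mod_cast not_lt.mp hk
      nlinarith [min_le_right (z.im + τ.im) (-z.im)]
    rw [norm_cexp_mul_qp, ← Real.exp_neg, Real.exp_le_exp]
    nlinarith [pi_pos]

theorem f1_cone_expansion_lower_general (m : ℕ) (hm : 0 < m) (τ z : ℂ)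
    (hz0 : -τ.im < z.im) (hz1 : z.im < 0)
    (y : ℂ) (hy : y = Complex.exp (2 * Real.pi * Complex.I * z)) :
    Summable (fun k : ℤ =>
      ‖y ^ (2 * k * (m : ℤ)) * qp τ ((m : ℝ) * (k : ℝ) ^ 2) / (1 - y * qp τ (k : ℝ))‖) ∧
    Summable (fun n : ℤ × ℤ => if 0 < n.1 ∧ 0 ≤ n.2 then
      ‖y ^ (2 * n.1 * (m : ℤ) + n.2) * qp τ ((m : ℝ) * (n.1 : ℝ) ^ 2 + (n.1 : ℝ) * (n.2 : ℝ))‖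
      else 0) ∧
    Summable (fun n : ℤ × ℤ => if n.1 ≤ 0 ∧ n.2 < 0 then
      ‖y ^ (2 * n.1 * (m : ℤ) + n.2) * qp τ ((m : ℝ) * (n.1 : ℝ) ^ 2 + (n.1 : ℝ) * (n.2 : ℝ))‖
      else 0) ∧
    (∑' k : ℤ, y ^ (2 * k * (m : ℤ)) * qp τ ((m : ℝ) * (k : ℝ) ^ 2) / (1 - y * qp τ (k : ℝ))) =
      (∑' n : ℤ × ℤ, if 0 < n.1 ∧ 0 ≤ n.2 then
        y ^ (2 * n.1 * (m : ℤ) + n.2) * qp τ ((m : ℝ) * (n.1 : ℝ) ^ 2 + (n.1 : ℝ) * (n.2 : ℝ))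
        else 0) -
      (∑' n : ℤ × ℤ, if n.1 ≤ 0 ∧ n.2 < 0 then
        y ^ (2 * n.1 * (m : ℤ) + n.2) * qp τ ((m : ℝ) * (n.1 : ℝ) ^ 2 + (n.1 : ℝ) * (n.2 : ℝ))
        else 0) := by
  subst hy
  obtain ⟨θ, hθ0, hθ1, hin, hout⟩ := exists_norm_cexp_mul_qp_le_or_inv_le hz0 hz1
  have ha := summable_norm_cexp_zpow_mul_qp hm (by linarith : 0 < τ.im) z
  simp only [zpow_mul_qp_add_mul (Complex.exp_ne_zero _), ← not_lt (a := (0 : ℤ))]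
  let a (k : ℤ) : ℂ := cexp (2 * π * I * z) ^ (2 * k * (m : ℤ)) * qp τ ((m : ℝ) * (k : ℝ) ^ 2)
  let r (k : ℤ) : ℂ := cexp (2 * π * I * z) * qp τ k
  exact ⟨summable_norm_div_one_sub (a := a) hθ0 hθ1
      (fun k => (em (0 < k)).imp (hin k) (hout k)) ha,
    summable_norm_ite_nonneg (a := a) (r := r) hθ0.le hθ1 hin ha,
    summable_norm_ite_neg (a := a) (r := r) hθ0 hθ1 hout ha,
    tsum_div_one_sub_eq_sub (a := a) (r := r) hθ0 hθ1 hin hout ha⟩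

/-- Geometric expansion of `f₁`: for `-Im τ < Im z < 0`,
`Σ_{k∈ℤ} y^{2km} q^{mk²}/(1 - y q^k) = Σ_{k>0,l≥0} y^{2km+l} q^{mk²+kl}
  - Σ_{k≤0,l<0} y^{2km+l} q^{mk²+kl}`. -/
theorem f1_cone_expansion_lower (m : ℕ) (hm : 0 < m) (τ z : ℂ) (hτ : 0 < τ.im)
    (hz0 : -τ.im < z.im) (hz1 : z.im < 0)
    (y : ℂ) (hy : y = Complex.exp (2 * Real.pi * Complex.I * z)) :
    Summable (fun k : ℤ =>
      ‖y ^ (2 * k * (m : ℤ)) * qp τ ((m : ℝ) * (k : ℝ) ^ 2) / (1 - y * qp τ (k : ℝ))‖) ∧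
    Summable (fun n : ℤ × ℤ => if 0 < n.1 ∧ 0 ≤ n.2 then
      ‖y ^ (2 * n.1 * (m : ℤ) + n.2) * qp τ ((m : ℝ) * (n.1 : ℝ) ^ 2 + (n.1 : ℝ) * (n.2 : ℝ))‖
      else 0) ∧
    Summable (fun n : ℤ × ℤ => if n.1 ≤ 0 ∧ n.2 < 0 then
      ‖y ^ (2 * n.1 * (m : ℤ) + n.2) * qp τ ((m : ℝ) * (n.1 : ℝ) ^ 2 + (n.1 : ℝ) * (n.2 : ℝ))‖
      else 0) ∧
    (∑' k : ℤ, y ^ (2 * k * (m : ℤ)) * qp τ ((m : ℝ) * (k : ℝ) ^ 2) / (1 - y * qp τ (k : ℝ))) =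
      (∑' n : ℤ × ℤ, if 0 < n.1 ∧ 0 ≤ n.2 then
        y ^ (2 * n.1 * (m : ℤ) + n.2) * qp τ ((m : ℝ) * (n.1 : ℝ) ^ 2 + (n.1 : ℝ) * (n.2 : ℝ))
        else 0) -
      (∑' n : ℤ × ℤ, if n.1 ≤ 0 ∧ n.2 < 0 then
        y ^ (2 * n.1 * (m : ℤ) + n.2) * qp τ ((m : ℝ) * (n.1 : ℝ) ^ 2 + (n.1 : ℝ) * (n.2 : ℝ))
        else 0) :=
  f1_cone_expansion_lower_general m hm τ z hz0 hz1 y hy
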